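/- Let H be a complex Hilbert space regarded as a topological vector space with its weak topology, 𝔜 a Hausdorff topological vector space over ℂ, and Φ : H → 𝔜 a continuous injective linear map with dense range. Let S be a bounded normal operator on H and let T_1, T_2 be continuous linear operators on 𝔜 with T_1 ∘ Φ = Φ ∘ S and T_2 ∘ Φ = Φ ∘ S*. If both triples (Φ, S, T_1) and (Φ, S*, T_2) admit approximate inverse intertwinings, then T_1⁻¹(Φ(H)) = T_2⁻¹(Φ(H)); moreover, whenever T_1 y = Φ x_1 and T_2 y = Φ x_2 one has ‖x_1‖ = ‖x_2‖, and in particular ker T_1 = ker T_2. -/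

import Mathlib

open Filter ContinuousLinearMap

/-- An approximate inverse intertwining for `(Φ, S, T)` where the Hilbert space `H` carries
its weak topology: `F α (Φ x) → x` weakly in `H`, `Φ (F α y) → y` in `𝔜`, and
`F α (T y) - S (F α y) → 0` weakly in `H`, along the filter `l`. -/
def IsWeakAII {H : Type*} [NormedAddCommGroup H] [NormedSpace ℂ H]
    {𝔜 : Type*} [AddCommGroup 𝔜] [Module ℂ 𝔜] [TopologicalSpace 𝔜]
    {ι : Type*} (l : Filter ι)
    (Φ : H →ₗ[ℂ] 𝔜) (S : H →L[ℂ] H) (T : 𝔜 →L[ℂ] 𝔜)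
    (F : ι → (𝔜 →ₗ[ℂ] H)) : Prop :=
  (∀ x : H, Tendsto (fun α => (F α (Φ x) : WeakSpace ℂ H)) l (nhds (x : WeakSpace ℂ H))) ∧
  (∀ y : 𝔜, Tendsto (fun α => Φ (F α y)) l (nhds y)) ∧
  (∀ y : 𝔜, Tendsto (fun α => (F α (T y) - S (F α y) : WeakSpace ℂ H)) l
    (nhds (0 : WeakSpace ℂ H)))

/-!
Normality of `S` means `‖S* z‖ = ‖S z‖`. If `T₁ y = Φ x₁`, the approximate inverse
intertwining forces `S (F₁ α y) → x₁`; hence `S* (F₁ α y)` is Cauchy, with a limit `x₂` of the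
same norm, and `Φ (S* (F₁ α y)) = T₂ (Φ (F₁ α y)) → T₂ y` gives `T₂ y = Φ x₂`. The roles of
`S` and `S*` are symmetric.
-/

theorem Filter.Tendsto.exists_tendsto_of_norm_map_eq {α E F G 𝓕 𝓖 : Type*}
    [SeminormedAddCommGroup E] [SeminormedAddCommGroup F] [NormedAddCommGroup G]
    [CompleteSpace G] [FunLike 𝓕 E F] [AddMonoidHomClass 𝓕 E F]
    [FunLike 𝓖 E G] [AddMonoidHomClass 𝓖 E G] {A : 𝓕} {B : 𝓖}
    (hAB : ∀ z, ‖B z‖ = ‖A z‖) {l : Filter α} [l.NeBot] {u : α → E} {x : F}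
    (hu : Tendsto (fun i => A (u i)) l (nhds x)) :
    ∃ x', Tendsto (fun i => B (u i)) l (nhds x') ∧ ‖x'‖ = ‖x‖ := by
  have hdist : ∀ i j, dist (B (u i)) (B (u j)) = dist (A (u i)) (A (u j)) := by
    intro i j
    rw [dist_eq_norm, dist_eq_norm, ← map_sub, ← map_sub, hAB]
  have hBu : Cauchy (l.map fun i => B (u i)) := by
    have hAu := cauchy_map_iff'.mp hu.cauchy_map
    rw [tendsto_uniformity_iff_dist_tendsto_zero] at hAu
    simp only [← hdist] at hAu
    exact cauchy_map_iff'.mpr (tendsto_uniformity_iff_dist_tendsto_zero.mpr hAu)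
  obtain ⟨x', hx'⟩ := cauchy_map_iff_exists_tendsto.mp hBu
  refine ⟨x', hx', tendsto_nhds_unique hx'.norm ?_⟩
  simpa only [hAB] using hu.norm

namespace IsWeakAII

variable {H : Type*} [NormedAddCommGroup H] [NormedSpace ℂ H]
  {𝔜 : Type*} [AddCommGroup 𝔜] [Module ℂ 𝔜] [TopologicalSpace 𝔜]
  {ι : Type*} {l : Filter ι} {Φ : H →ₗ[ℂ] 𝔜} {S : H →L[ℂ] H} {T : 𝔜 →L[ℂ] 𝔜}
  {F : ι → (𝔜 →ₗ[ℂ] H)}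

theorem tendsto_apply_of_apply_eq (hF : IsWeakAII l Φ S T F) {y : 𝔜} {x : H}
    (hy : T y = Φ x) : Tendsto (fun i => S (F i y)) l (nhds x) := by
  have hFTy : Tendsto (fun i => F i (T y)) l (nhds x) := hy ▸ hF.1 x
  -- The ascription `: WeakSpace ℂ H` in `IsWeakAII` elaborates away: these are norm limits.
  have hdefect : Tendsto (fun i => F i (T y) - S (F i y)) l (nhds 0) := hF.2.2 y
  simpa using hFTy.sub hdefect

theorem exists_apply_eq_of_norm_map_eq [CompleteSpace H] [T2Space 𝔜] [l.NeBot]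
    (hF : IsWeakAII l Φ S T F) (hΦ : Continuous Φ) {B : H →L[ℂ] H} {T' : 𝔜 →L[ℂ] 𝔜}
    (hT' : ∀ x, T' (Φ x) = Φ (B x)) (hBS : ∀ z, ‖B z‖ = ‖S z‖) {y : 𝔜} {x : H}
    (hy : T y = Φ x) : ∃ x', T' y = Φ x' ∧ ‖x'‖ = ‖x‖ := by
  obtain ⟨x', hBx', hx'⟩ := (hF.tendsto_apply_of_apply_eq hy).exists_tendsto_of_norm_map_eq hBS
  refine ⟨x', tendsto_nhds_unique ?_ ((hΦ.tendsto x').comp hBx'), hx'⟩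
  simpa only [Function.comp_def, hT'] using (T'.continuous.tendsto y).comp (hF.2.1 y)

end IsWeakAII

theorem aii_normal_norm_eq_general
    {H : Type*} [NormedAddCommGroup H] [InnerProductSpace ℂ H] [CompleteSpace H]
    {𝔜 : Type*} [AddCommGroup 𝔜] [Module ℂ 𝔜] [TopologicalSpace 𝔜]
    [T2Space 𝔜]
    (Φ : H →ₗ[ℂ] 𝔜) (hΦc : Continuous fun x : WeakSpace ℂ H => Φ x)
    (hΦinj : Function.Injective Φ)
    (S : H →L[ℂ] H) (hS : adjoint S ∘L S = S ∘L adjoint S)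
    (T₁ T₂ : 𝔜 →L[ℂ] 𝔜)
    (h₁ : ∀ x, T₁ (Φ x) = Φ (S x))
    (h₂ : ∀ x, T₂ (Φ x) = Φ (adjoint S x))
    {ι₁ : Type*} (l₁ : Filter ι₁) [l₁.NeBot] (F₁ : ι₁ → (𝔜 →ₗ[ℂ] H))
    (hF₁ : IsWeakAII l₁ Φ S T₁ F₁)
    {ι₂ : Type*} (l₂ : Filter ι₂) [l₂.NeBot] (F₂ : ι₂ → (𝔜 →ₗ[ℂ] H))
    (hF₂ : IsWeakAII l₂ Φ (adjoint S) T₂ F₂) :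
    (∀ y : 𝔜, (∃ x : H, T₁ y = Φ x) ↔ (∃ x : H, T₂ y = Φ x)) ∧
    (∀ (y : 𝔜) (x₁ x₂ : H), T₁ y = Φ x₁ → T₂ y = Φ x₂ → ‖x₁‖ = ‖x₂‖) ∧
    (∀ y : 𝔜, T₁ y = 0 ↔ T₂ y = 0) := by
  have hΦ : Continuous Φ := hΦc.comp (toWeakSpaceCLM ℂ H).continuous
  have hnorm : ∀ z, ‖S z‖ = ‖adjoint S z‖ := isStarNormal_iff_norm_eq_adjoint.mp ⟨hS⟩
  have transfer₁ {y x} (hy : T₁ y = Φ x) : ∃ x', T₂ y = Φ x' ∧ ‖x'‖ = ‖x‖ :=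
    hF₁.exists_apply_eq_of_norm_map_eq hΦ h₂ (fun z => (hnorm z).symm) hy
  have transfer₂ {y x} (hy : T₂ y = Φ x) : ∃ x', T₁ y = Φ x' ∧ ‖x'‖ = ‖x‖ :=
    hF₂.exists_apply_eq_of_norm_map_eq hΦ h₁ hnorm hy
  refine ⟨fun y => ⟨?_, ?_⟩, fun y x₁ x₂ e₁ e₂ => ?_, fun y => ⟨fun hy => ?_, fun hy => ?_⟩⟩
  · exact fun ⟨x, hx⟩ => (transfer₁ hx).imp fun _ => And.left
  · exact fun ⟨x, hx⟩ => (transfer₂ hx).imp fun _ => And.left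
  · obtain ⟨x', hx', hnx'⟩ := transfer₁ e₁
    rw [hΦinj (e₂.symm.trans hx'), hnx']
  · obtain ⟨x, hx, hnx⟩ := transfer₁ (hy.trans Φ.map_zero.symm)
    rw [hx, norm_eq_zero.mp (hnx.trans norm_zero), map_zero]
  · obtain ⟨x, hx, hnx⟩ := transfer₂ (hy.trans Φ.map_zero.symm)
    rw [hx, norm_eq_zero.mp (hnx.trans norm_zero), map_zero]

/-- Suppose `S` is a normal operator on the Hilbert space `H` (regarded with its weak
topology), `Φ` intertwines `S` with `T₁` and `S*` with `T₂`, and both triples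
`(Φ, S, T₁)` and `(Φ, S*, T₂)` admit approximate inverse intertwinings. Then
`T₁⁻¹(Im Φ) = T₂⁻¹(Im Φ)`, `‖Φ⁻¹ (T₁ y)‖ = ‖Φ⁻¹ (T₂ y)‖` on it, and
`ker T₁ = ker T₂`. -/
theorem aii_normal_norm_eq
    {H : Type*} [NormedAddCommGroup H] [InnerProductSpace ℂ H] [CompleteSpace H]
    {𝔜 : Type*} [AddCommGroup 𝔜] [Module ℂ 𝔜] [TopologicalSpace 𝔜]
    [IsTopologicalAddGroup 𝔜] [ContinuousSMul ℂ 𝔜] [T2Space 𝔜]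
    (Φ : H →ₗ[ℂ] 𝔜) (hΦc : Continuous fun x : WeakSpace ℂ H => Φ x)
    (hΦinj : Function.Injective Φ) (hΦdr : DenseRange Φ)
    (S : H →L[ℂ] H) (hS : adjoint S ∘L S = S ∘L adjoint S)
    (T₁ T₂ : 𝔜 →L[ℂ] 𝔜)
    (h₁ : ∀ x, T₁ (Φ x) = Φ (S x))
    (h₂ : ∀ x, T₂ (Φ x) = Φ (adjoint S x))
    {ι₁ : Type*} (l₁ : Filter ι₁) [l₁.NeBot] (F₁ : ι₁ → (𝔜 →ₗ[ℂ] H))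
    (hF₁ : IsWeakAII l₁ Φ S T₁ F₁)
    {ι₂ : Type*} (l₂ : Filter ι₂) [l₂.NeBot] (F₂ : ι₂ → (𝔜 →ₗ[ℂ] H))
    (hF₂ : IsWeakAII l₂ Φ (adjoint S) T₂ F₂) :
    (∀ y : 𝔜, (∃ x : H, T₁ y = Φ x) ↔ (∃ x : H, T₂ y = Φ x)) ∧
    (∀ (y : 𝔜) (x₁ x₂ : H), T₁ y = Φ x₁ → T₂ y = Φ x₂ → ‖x₁‖ = ‖x₂‖) ∧
    (∀ y : 𝔜, T₁ y = 0 ↔ T₂ y = 0) :=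
  aii_normal_norm_eq_general Φ hΦc hΦinj S hS T₁ T₂ h₁ h₂ l₁ F₁ hF₁ l₂ F₂ hF₂
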